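/- arXiv:0707.4197 — 11 statements merged into one kernel-verified Lean document; each statement's English description precedes it below -/
import Mathlib

section
/- Let φ: R → S be a local homomorphism of Noetherian local rings satisfying condition (†). If M and N are S-modules with N finitely generated over S, then every R-linear map M → N is S-linear; i.e., Hom_R(M,N) = Hom_S(M,N). -/
/-!
Let `K ⊆ N` be the `S`-submodule spanned by the defects `f (s • x) - s • f x` of an `R`-linear
map `f : M → N`. Defects vanish for `s` in the image of `R`, and the identity
`f (c t x) - c t f x = (f (t (c x)) - t f (c x)) + t (f (c x) - c f x)` shows that defects of
elements of `𝔪_R S = 𝔪_S` lie in `𝔪_S K`. As every `s` is congruent modulo `𝔪_S` to an element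
of the image of `R`, `K = 𝔪_S K`; `K` is finitely generated since `S` is Noetherian and `N` is
finite over `S`, so `K = 0` by Nakayama's lemma.
-/

namespace LinearMap

variable {R : Type*} (S : Type*) {M N : Type*} [CommRing R] [CommRing S]
  [AddCommGroup M] [AddCommGroup N] [Module S M] [Module S N] [Module R M] [Module R N]

def scalarDefect (f : M →ₗ[R] N) : Submodule S N :=
  Submodule.span S (Set.range fun p : S × M => f (p.1 • p.2) - p.1 • f p.2)

variable {S}

theorem scalarDefect_eq_bot_iff (f : M →ₗ[R] N) :
    scalarDefect S f = ⊥ ↔ ∀ (s : S) (x : M), f (s • x) = s • f x := by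
  rw [scalarDefect, Submodule.span_eq_bot, Set.forall_mem_range, Prod.forall]
  simp only [sub_eq_zero]

variable [Algebra R S] [IsScalarTower R S M] [IsScalarTower R S N]

theorem smul_sub_mem_map_smul_scalarDefect (f : M →ₗ[R] N) (I : Ideal R) {t : S}
    (ht : t ∈ I.map (algebraMap R S)) (x : M) :
    f (t • x) - t • f x ∈ I.map (algebraMap R S) • scalarDefect S f := by
  induction ht using Submodule.span_induction generalizing x with
  | mem _ h =>
    obtain ⟨r, -, rfl⟩ := h
    simp
  | zero => simp
  | add t₁ t₂ _ _ ih₁ ih₂ =>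
    have : f ((t₁ + t₂) • x) - (t₁ + t₂) • f x
        = (f (t₁ • x) - t₁ • f x) + (f (t₂ • x) - t₂ • f x) := by
      simp only [add_smul, map_add]
      abel
    rw [this]
    exact add_mem (ih₁ x) (ih₂ x)
  | smul c t ht ih =>
    have : f ((c • t) • x) - (c • t) • f x
        = (f (t • (c • x)) - t • f (c • x)) + t • (f (c • x) - c • f x) := by
      rw [smul_eq_mul, mul_comm, mul_smul, mul_smul, smul_sub]
      abel
    rw [this]
    exact add_mem (ih (c • x)) (Submodule.smul_mem_smul ht (Submodule.subset_span ⟨(c, x), rfl⟩))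

theorem scalarDefect_le_map_smul (f : M →ₗ[R] N) (I : Ideal R)
    (h : ∀ s : S, ∃ r : R, s - algebraMap R S r ∈ I.map (algebraMap R S)) :
    scalarDefect S f ≤ I.map (algebraMap R S) • scalarDefect S f := by
  rw [scalarDefect, Submodule.span_le]
  rintro _ ⟨⟨s, x⟩, rfl⟩
  obtain ⟨r, hr⟩ := h s
  have : f (s • x) - s • f x
      = f ((s - algebraMap R S r) • x) - (s - algebraMap R S r) • f x := by
    simp only [sub_smul, map_sub, algebraMap_smul, map_smul]
    abel
  show f (s • x) - s • f x ∈ _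
  rw [this]
  exact smul_sub_mem_map_smul_scalarDefect f I hr x

end LinearMap

theorem stmt_1_general (R S : Type*) [CommRing R] [CommRing S]
    [IsNoetherianRing S] [IsLocalRing R] [IsLocalRing S]
    [Algebra R S]
    (h1 : (IsLocalRing.maximalIdeal R).map (algebraMap R S) = IsLocalRing.maximalIdeal S)
    (h2 : ∀ s : S, ∃ r : R, s - algebraMap R S r ∈ IsLocalRing.maximalIdeal S)
    (M N : Type*) [AddCommGroup M] [AddCommGroup N]
    [Module S M] [Module S N] [Module R M] [Module R N]
    [IsScalarTower R S M] [IsScalarTower R S N]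
    [Module.Finite S N] :
    ∀ (f : M →ₗ[R] N) (s : S) (x : M), f (s • x) = s • f x := by
  intro f
  have hle := f.scalarDefect_le_map_smul (IsLocalRing.maximalIdeal R) (h1 ▸ h2)
  rw [h1] at hle
  refine f.scalarDefect_eq_bot_iff.mp <|
    Submodule.eq_bot_of_le_smul_of_le_jacobson_bot _ _ (IsNoetherian.noetherian _) hle ?_
  rw [IsLocalRing.jacobson_eq_maximalIdeal ⊥ bot_ne_top]

theorem stmt_1 (R S : Type*) [CommRing R] [CommRing S]
    [IsNoetherianRing R] [IsNoetherianRing S] [IsLocalRing R] [IsLocalRing S]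
    [Algebra R S] [IsLocalHom (algebraMap R S)]
    (h1 : (IsLocalRing.maximalIdeal R).map (algebraMap R S) = IsLocalRing.maximalIdeal S)
    (h2 : ∀ s : S, ∃ r : R, s - algebraMap R S r ∈ IsLocalRing.maximalIdeal S)
    (M N : Type*) [AddCommGroup M] [AddCommGroup N]
    [Module S M] [Module S N] [Module R M] [Module R N]
    [IsScalarTower R S M] [IsScalarTower R S N]
    [Module.Finite S N] :
    ∀ (f : M →ₗ[R] N) (s : S) (x : M), f (s • x) = s • f x :=
  stmt_1_general R S h1 h2 M N
end

section
/- Let φ: R → S be a local homomorphism of Noetherian local rings satisfying condition (†), and let M be a finitely generated S-module. Then M is indecomposable as an R-module if and only if M is indecomposable as an S-module. -/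
/-!
An `R`-linear map between finitely generated `S`-modules is automatically `S`-linear: writing
`s = r + t` with `r ∈ R` and `t ∈ 𝔪_S = 𝔪_R S`, the defect `f (s • x) - s • f x` lies in
`𝔪_S ^ k N` for every `k` by induction, hence vanishes by Krull's intersection theorem.
In particular the projections attached to an `R`-direct sum decomposition of `M` are `S`-linear,
so the summands are `S`-submodules.
-/

open IsLocalRing Submodule

section ScalarExtension

variable {R S M : Type*} [CommRing R] [CommRing S] [AddCommGroup M] [Module S M] [Module R M]

theorem Submodule.smul_mem_of_isCompl
    (hlin : ∀ f : M →ₗ[R] M, ∀ (s : S) (x : M), f (s • x) = s • f x)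
    {A B : Submodule R M} (hAB : IsCompl A B) (s : S) {a : M} (ha : a ∈ A) : s • a ∈ A := by
  rw [← A.projection_apply_of_mem_left hAB ha, ← hlin]
  exact A.projection_apply_mem hAB _

variable [Algebra R S] [IsScalarTower R S M]

theorem Submodule.exists_restrictScalars_eq_of_isCompl
    (hlin : ∀ f : M →ₗ[R] M, ∀ (s : S) (x : M), f (s • x) = s • f x)
    {A B : Submodule R M} (hAB : IsCompl A B) : ∃ A' : Submodule S M, A'.restrictScalars R = A :=
  ⟨{ A.toAddSubmonoid with smul_mem' := fun s _ ha => smul_mem_of_isCompl hlin hAB s ha }, rfl⟩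

variable {N : Type*} [AddCommGroup N] [Module S N] [Module R N] [IsScalarTower R S N]

theorem LinearMap.map_smul_sub_smul_mem_pow_smul_top {I : Ideal R} {J : Ideal S}
    (hIJ : I.map (algebraMap R S) = J) (hJ : ∀ s : S, ∃ r : R, s - algebraMap R S r ∈ J)
    (f : M →ₗ[R] N) (k : ℕ) (s : S) (x : M) :
    f (s • x) - s • f x ∈ (J ^ k • ⊤ : Submodule S N) := by
  induction k generalizing s x with
  | zero => simp [Ideal.one_eq_top]
  | succ k ih =>
    have hJmem : ∀ t ∈ J, ∀ x, f (t • x) - t • f x ∈ (J ^ (k + 1) • ⊤ : Submodule S N) := by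
      intro t ht
      have ht' : t ∈ I • (⊤ : Submodule R S) := by rwa [Ideal.smul_top_eq_map, hIJ]
      refine Submodule.smul_induction_on ht' (fun a ha u _ x => ?_) fun t t' ht ht' x => ?_
      · rw [smul_assoc, smul_assoc, map_smul, ← smul_sub, ← algebraMap_smul S a, pow_succ',
          Submodule.mul_smul]
        exact smul_mem_smul (hIJ ▸ Ideal.mem_map_of_mem _ ha) (ih u x)
      · simpa only [add_smul, map_add, add_sub_add_comm] using add_mem (ht x) (ht' x)
    obtain ⟨r, hr⟩ := hJ s
    have hdefect : f (s • x) - s • f x =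
        f ((s - algebraMap R S r) • x) - (s - algebraMap R S r) • f x := by
      simp only [sub_smul, map_sub, algebraMap_smul, map_smul]
      abel
    exact hdefect ▸ hJmem _ hr x

theorem LinearMap.map_smul_of_le_jacobson [IsNoetherianRing S] [Module.Finite S N]
    {I : Ideal R} {J : Ideal S} (hIJ : I.map (algebraMap R S) = J)
    (hJ : ∀ s : S, ∃ r : R, s - algebraMap R S r ∈ J) (hJrad : J ≤ Ideal.jacobson ⊥)
    (f : M →ₗ[R] N) (s : S) (x : M) : f (s • x) = s • f x := by
  rw [← sub_eq_zero, ← Submodule.mem_bot S,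
    ← Ideal.iInf_pow_smul_eq_bot_of_le_jacobson J hJrad, Submodule.mem_iInf]
  exact fun k => f.map_smul_sub_smul_mem_pow_smul_top hIJ hJ k s x

end ScalarExtension

theorem stmt_2_general (R S : Type*) [CommRing R] [CommRing S]
    [IsNoetherianRing S] [IsLocalRing R] [IsLocalRing S]
    [Algebra R S]
    (h1 : (IsLocalRing.maximalIdeal R).map (algebraMap R S) = IsLocalRing.maximalIdeal S)
    (h2 : ∀ s : S, ∃ r : R, s - algebraMap R S r ∈ IsLocalRing.maximalIdeal S)
    (M : Type*) [AddCommGroup M] [Module S M] [Module R M] [IsScalarTower R S M]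
    [Module.Finite S M] :
    (¬ ∃ (A B : Submodule R M), IsCompl A B ∧ A ≠ ⊥ ∧ B ≠ ⊥) ↔
      (¬ ∃ (A B : Submodule S M), IsCompl A B ∧ A ≠ ⊥ ∧ B ≠ ⊥) := by
  have hlin : ∀ f : M →ₗ[R] M, ∀ (s : S) (x : M), f (s • x) = s • f x := fun f =>
    f.map_smul_of_le_jacobson h1 h2 (maximalIdeal_le_jacobson _)
  refine not_congr ⟨?_, ?_⟩
  · rintro ⟨A, B, hAB, hA, hB⟩
    obtain ⟨A', rfl⟩ := exists_restrictScalars_eq_of_isCompl hlin hAB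
    obtain ⟨B', rfl⟩ := exists_restrictScalars_eq_of_isCompl hlin hAB.symm
    exact ⟨A', B', (isCompl_restrictScalars_iff R).mp hAB, by simpa using hA, by simpa using hB⟩
  · rintro ⟨A, B, hAB, hA, hB⟩
    exact ⟨A.restrictScalars R, B.restrictScalars R, (isCompl_restrictScalars_iff R).mpr hAB,
      by simpa using hA, by simpa using hB⟩

theorem stmt_2 (R S : Type*) [CommRing R] [CommRing S]
    [IsNoetherianRing R] [IsNoetherianRing S] [IsLocalRing R] [IsLocalRing S]
    [Algebra R S] [IsLocalHom (algebraMap R S)]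
    (h1 : (IsLocalRing.maximalIdeal R).map (algebraMap R S) = IsLocalRing.maximalIdeal S)
    (h2 : ∀ s : S, ∃ r : R, s - algebraMap R S r ∈ IsLocalRing.maximalIdeal S)
    (M : Type*) [AddCommGroup M] [Module S M] [Module R M] [IsScalarTower R S M]
    [Module.Finite S M] :
    (¬ ∃ (A B : Submodule R M), IsCompl A B ∧ A ≠ ⊥ ∧ B ≠ ⊥) ↔
      (¬ ∃ (A B : Submodule S M), IsCompl A B ∧ A ≠ ⊥ ∧ B ≠ ⊥) :=
  stmt_2_general R S h1 h2 M
end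

section
/- Let φ: R → S be a local homomorphism of Noetherian local rings satisfying condition (†). Let N be a finitely generated S-module and V an R-submodule of N. Then V admits at most one S-module structure compatible with its R-module structure; concretely, if (s,v) ↦ s∘v is an S-module structure on V compatible with the R-action inherited from N, then s∘v = s·v (the N-multiplication) for all s ∈ S, v ∈ V. -/
/-! The defects `s ∘ v - s • v` span an `S`-submodule `D` of the finitely generated module `N`.
For `r ∈ R` the defect of `φ r * s` is `φ r` times that of `s`, and defects are additive in `s`,
so every element of `mS` has its defects in `(mS) • D`. Since `S = φ R + n` and `φ R` has zero
defect, `D ≤ n • D`, and Nakayama's lemma gives `D = 0`. -/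

namespace CompatibleAction

variable {R S N : Type*} [CommRing R] [CommRing S] [AddCommGroup N] [Module S N] [Module R N]

def defect (smul : S → N → N) (s : S) (v : N) : N := smul s v - s • v

def defectSpan (smul : S → N → N) (V : Submodule R N) : Submodule S N :=
  Submodule.span S {x | ∃ s, ∃ v ∈ V, defect smul s v = x}

variable {smul : S → N → N} {V : Submodule R N}

lemma defect_mem_defectSpan (s : S) {v : N} (hv : v ∈ V) :
    defect smul s v ∈ defectSpan smul V :=
  Submodule.subset_span ⟨s, v, hv, rfl⟩

lemma defect_add (hadds : ∀ s t, ∀ v ∈ V, smul (s + t) v = smul s v + smul t v)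
    (s t : S) {v : N} (hv : v ∈ V) :
    defect smul (s + t) v = defect smul s v + defect smul t v := by
  simp only [defect, hadds s t v hv, add_smul]
  abel

variable [Algebra R S] [IsScalarTower R S N]

lemma defect_algebraMap (hcompat : ∀ r : R, ∀ v ∈ V, smul (algebraMap R S r) v = r • v)
    (r : R) {v : N} (hv : v ∈ V) : defect smul (algebraMap R S r) v = 0 := by
  rw [defect, hcompat r v hv, algebraMap_smul, sub_self]

lemma defect_algebraMap_mul (hmem : ∀ s, ∀ v ∈ V, smul s v ∈ V)
    (hmul : ∀ s t, ∀ v ∈ V, smul (s * t) v = smul s (smul t v))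
    (hcompat : ∀ r : R, ∀ v ∈ V, smul (algebraMap R S r) v = r • v)
    (r : R) (s : S) {v : N} (hv : v ∈ V) :
    defect smul (algebraMap R S r * s) v = algebraMap R S r • defect smul s v := by
  rw [defect, defect, hmul _ _ v hv, hcompat r _ (hmem s v hv), ← algebraMap_smul S r,
    mul_smul, smul_sub]

lemma defect_mem_smul_defectSpan_of_mem_map (hmem : ∀ s, ∀ v ∈ V, smul s v ∈ V)
    (hmul : ∀ s t, ∀ v ∈ V, smul (s * t) v = smul s (smul t v))
    (hadds : ∀ s t, ∀ v ∈ V, smul (s + t) v = smul s v + smul t v)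
    (hcompat : ∀ r : R, ∀ v ∈ V, smul (algebraMap R S r) v = r • v)
    (I : Ideal R) {s : S} (hs : s ∈ I.map (algebraMap R S)) {v : N} (hv : v ∈ V) :
    defect smul s v ∈ I.map (algebraMap R S) • defectSpan smul V := by
  -- The induction has to carry all multiples `a * x`, as only those are stable under `S`-scaling.
  suffices ∀ a, defect smul (a * s) v ∈ I.map (algebraMap R S) • defectSpan smul V by
    simpa using this 1
  induction hs using Submodule.span_induction with
  | mem x hx =>
    obtain ⟨r, hr, rfl⟩ := hx
    intro a
    rw [mul_comm, defect_algebraMap_mul hmem hmul hcompat r a hv]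
    exact Submodule.smul_mem_smul (Ideal.mem_map_of_mem _ hr) (defect_mem_defectSpan a hv)
  | zero =>
    intro a
    rw [mul_zero, ← map_zero (algebraMap R S), defect_algebraMap hcompat 0 hv]
    exact zero_mem _
  | add x y _ _ hx hy =>
    intro a
    rw [mul_add, defect_add hadds _ _ hv]
    exact add_mem (hx a) (hy a)
  | smul b x _ hx =>
    intro a
    simpa only [smul_eq_mul, ← mul_assoc] using hx (a * b)

lemma defectSpan_le_smul (hmem : ∀ s, ∀ v ∈ V, smul s v ∈ V)
    (hmul : ∀ s t, ∀ v ∈ V, smul (s * t) v = smul s (smul t v))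
    (hadds : ∀ s t, ∀ v ∈ V, smul (s + t) v = smul s v + smul t v)
    (hcompat : ∀ r : R, ∀ v ∈ V, smul (algebraMap R S r) v = r • v)
    (I : Ideal R) (hI : ∀ s : S, ∃ r : R, s - algebraMap R S r ∈ I.map (algebraMap R S)) :
    defectSpan smul V ≤ I.map (algebraMap R S) • defectSpan smul V := by
  rw [defectSpan, Submodule.span_le]
  rintro _ ⟨s, v, hv, rfl⟩
  obtain ⟨r, hr⟩ := hI s
  have hsplit : defect smul s v = defect smul (s - algebraMap R S r) v := by
    rw [← add_zero (defect smul (s - _) v), ← defect_algebraMap hcompat r hv,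
      ← defect_add hadds _ _ hv, sub_add_cancel]
  rw [hsplit]
  exact defect_mem_smul_defectSpan_of_mem_map hmem hmul hadds hcompat I hr hv

end CompatibleAction

open CompatibleAction in
theorem stmt_3_general (R S : Type*) [CommRing R] [CommRing S]
    [IsNoetherianRing S] [IsLocalRing R] [IsLocalRing S]
    [Algebra R S]
    (h1 : (IsLocalRing.maximalIdeal R).map (algebraMap R S) = IsLocalRing.maximalIdeal S)
    (h2 : ∀ s : S, ∃ r : R, s - algebraMap R S r ∈ IsLocalRing.maximalIdeal S)
    (N : Type*) [AddCommGroup N] [Module S N] [Module R N] [IsScalarTower R S N]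
    [Module.Finite S N]
    (V : Submodule R N)
    -- an S-module structure `smul` on V, compatible with the R-action inherited from N
    (smul : S → N → N)
    (hmem : ∀ s, ∀ v ∈ V, smul s v ∈ V)
    (hmul : ∀ s t, ∀ v ∈ V, smul (s * t) v = smul s (smul t v))
    (hadds : ∀ s t, ∀ v ∈ V, smul (s + t) v = smul s v + smul t v)
    (hcompat : ∀ r : R, ∀ v ∈ V, smul (algebraMap R S r) v = r • v) :
    ∀ s : S, ∀ v ∈ V, smul s v = s • v := by
  have hle := defectSpan_le_smul hmem hmul hadds hcompat (IsLocalRing.maximalIdeal R) (h1 ▸ h2)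
  have hbot : defectSpan smul V = ⊥ := by
    refine Submodule.eq_bot_of_le_smul_of_le_jacobson_bot _ _
      (IsNoetherian.noetherian _) hle ?_
    rw [h1, IsLocalRing.jacobson_eq_maximalIdeal ⊥ bot_ne_top]
  intro s v hv
  have := defect_mem_defectSpan (smul := smul) s hv
  rwa [hbot, Submodule.mem_bot, defect, sub_eq_zero] at this

theorem stmt_3 (R S : Type*) [CommRing R] [CommRing S]
    [IsNoetherianRing R] [IsNoetherianRing S] [IsLocalRing R] [IsLocalRing S]
    [Algebra R S] [IsLocalHom (algebraMap R S)]
    (h1 : (IsLocalRing.maximalIdeal R).map (algebraMap R S) = IsLocalRing.maximalIdeal S)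
    (h2 : ∀ s : S, ∃ r : R, s - algebraMap R S r ∈ IsLocalRing.maximalIdeal S)
    (N : Type*) [AddCommGroup N] [Module S N] [Module R N] [IsScalarTower R S N]
    [Module.Finite S N]
    (V : Submodule R N)
    -- an S-module structure `smul` on V, compatible with the R-action inherited from N
    (smul : S → N → N)
    (hmem : ∀ s, ∀ v ∈ V, smul s v ∈ V)
    (hone : ∀ v ∈ V, smul 1 v = v)
    (hmul : ∀ s t, ∀ v ∈ V, smul (s * t) v = smul s (smul t v))
    (haddv : ∀ s, ∀ v ∈ V, ∀ w ∈ V, smul s (v + w) = smul s v + smul s w)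
    (hadds : ∀ s t, ∀ v ∈ V, smul (s + t) v = smul s v + smul t v)
    (hzero : ∀ v ∈ V, smul 0 v = 0)
    (hzerov : ∀ s, smul s 0 = 0)
    (hcompat : ∀ r : R, ∀ v ∈ V, smul (algebraMap R S r) v = r • v) :
    ∀ s : S, ∀ v ∈ V, smul s v = s • v :=
  stmt_3_general R S h1 h2 N V smul hmem hmul hadds hcompat
end

section
/- Let φ: R → S be a local homomorphism of Noetherian local rings satisfying condition (†), and let M be an R-submodule of a finitely generated S-module N. Then the set V(M) = {x ∈ N : Sx ⊆ M} is the unique largest R-submodule of M admitting a compatible S-module structure; moreover every R-submodule of M admitting a compatible S-module structure is an S-submodule of N contained in M. -/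
/-!
Let `V` carry a compatible action `∘` and let `D ⊆ N` be the `S`-span of the defects
`s ∘ v - s • v`. The defect is additive in `s` and satisfies the cocycle rule
`(x t) ∘ v - (x t) • v = (x ∘ (t ∘ v) - x • (t ∘ v)) + x • (t ∘ v - t • v)`, so defects of
elements of `𝔪_R S` land in `𝔪_R S • D`. Defects of elements of `R` vanish, and every `s ∈ S`
differs from an element of `R` by one of `𝔪_R S`; hence `D ≤ 𝔪_S • D`, and Nakayama gives
`D = 0`. Thus `∘` is the restriction of the action of `S` on `N`, and `V` is an `S`-submodule.
-/

/-- An R-submodule `V` of an S-module `N` "has a compatible S-module structure" if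
there is an S-scalar multiplication on `V` (given by a function `smul : S → N → N`
preserving `V`) satisfying the module axioms and compatible with the R-action. -/
def HasCompatibleSMulOn (R S N : Type*) [CommRing R] [CommRing S] [Algebra R S]
    [AddCommGroup N] [Module S N] [Module R N] [IsScalarTower R S N]
    (V : Submodule R N) : Prop :=
  ∃ smul : S → N → N,
    (∀ s, ∀ v ∈ V, smul s v ∈ V) ∧
    (∀ v ∈ V, smul 1 v = v) ∧
    (∀ s t, ∀ v ∈ V, smul (s * t) v = smul s (smul t v)) ∧
    (∀ s, ∀ v ∈ V, ∀ w ∈ V, smul s (v + w) = smul s v + smul s w) ∧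
    (∀ s t, ∀ v ∈ V, smul (s + t) v = smul s v + smul t v) ∧
    (∀ v ∈ V, smul 0 v = 0) ∧
    (∀ s, smul s 0 = 0) ∧
    (∀ r : R, ∀ v ∈ V, smul (algebraMap R S r) v = r • v)

section CompatibleAction

open Submodule

variable {R S N : Type*} [CommRing R] [CommRing S] [Algebra R S]
  [AddCommGroup N] [Module S N] [Module R N] [IsScalarTower R S N]

namespace Submodule

variable (S) in
/-- The largest `S`-submodule of `N` contained in the `R`-submodule `M`. -/
def core (M : Submodule R N) : Submodule S N where
  carrier := {x | ∀ s : S, s • x ∈ M}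
  zero_mem' s := by simpa only [smul_zero] using M.zero_mem
  add_mem' hx hy s := by simpa only [smul_add] using M.add_mem (hx s) (hy s)
  smul_mem' t x hx s := by simpa only [smul_smul] using hx (s * t)

theorem core_le (M : Submodule R N) : (core S M).restrictScalars R ≤ M := fun x hx => by
  simpa only [one_smul] using hx 1

end Submodule

theorem hasCompatibleSMulOn_restrictScalars (P : Submodule S N) :
    HasCompatibleSMulOn R S N (P.restrictScalars R) :=
  ⟨(· • ·), fun s _ hv => P.smul_mem s hv, fun v _ => one_smul S v,
    fun s t v _ => mul_smul s t v, fun s v _ w _ => smul_add s v w,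
    fun s t v _ => add_smul s t v, fun v _ => zero_smul S v, smul_zero,
    fun r v _ => algebraMap_smul S r v⟩

section Defect

variable (V : Submodule R N) (smul : S → N → N)

def defectSpan : Submodule S N :=
  span S {d | ∃ s, ∃ v ∈ V, d = smul s v - s • v}

variable {V smul}

omit [Algebra R S] [IsScalarTower R S N] in
theorem sub_smul_mem_defectSpan (s : S) {v : N} (hv : v ∈ V) :
    smul s v - s • v ∈ defectSpan V smul :=
  subset_span ⟨s, v, hv, rfl⟩

variable (hmem : ∀ s, ∀ v ∈ V, smul s v ∈ V)
  (hmul : ∀ s t, ∀ v ∈ V, smul (s * t) v = smul s (smul t v))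
  (hadd : ∀ s t, ∀ v ∈ V, smul (s + t) v = smul s v + smul t v)
  (halg : ∀ r : R, ∀ v ∈ V, smul (algebraMap R S r) v = r • v)
include hmem hmul hadd halg

theorem sub_smul_mem_map_smul_defectSpan (I : Ideal R) {x : S}
    (hx : x ∈ I.map (algebraMap R S)) :
    ∀ v ∈ V, smul x v - x • v ∈ I.map (algebraMap R S) • defectSpan V smul := by
  induction hx using Submodule.span_induction with
  | mem x hx =>
    obtain ⟨r, -, rfl⟩ := hx
    intro v hv
    rw [halg r v hv, algebraMap_smul, sub_self]
    exact zero_mem _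
  | zero =>
    intro v hv
    have h0 : smul 0 v = 0 := by simpa using hadd 0 0 v hv
    rw [h0, zero_smul, sub_zero]
    exact zero_mem _
  | add x y _ _ hx hy =>
    intro v hv
    rw [hadd x y v hv, add_smul, add_sub_add_comm]
    exact add_mem (hx v hv) (hy v hv)
  | smul t x hxI hx =>
    intro v hv
    have cocycle : smul (t • x) v - (t • x) • v =
        (smul x (smul t v) - x • smul t v) + x • (smul t v - t • v) := by
      rw [smul_eq_mul, mul_comm, hmul x t v hv, mul_smul, smul_sub]
      abel
    rw [cocycle]
    exact add_mem (hx _ (hmem t v hv)) (smul_mem_smul hxI (sub_smul_mem_defectSpan t hv))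

theorem defectSpan_le_map_smul (I : Ideal R)
    (hI : ∀ s : S, ∃ r : R, s - algebraMap R S r ∈ I.map (algebraMap R S)) :
    defectSpan V smul ≤ I.map (algebraMap R S) • defectSpan V smul := by
  refine span_le.2 ?_
  rintro _ ⟨s, v, hv, rfl⟩
  obtain ⟨r, hr⟩ := hI s
  have hsplit :
      smul s v - s • v = smul (s - algebraMap R S r) v - (s - algebraMap R S r) • v := by
    have := hadd (algebraMap R S r) (s - algebraMap R S r) v hv
    rw [add_sub_cancel, halg r v hv] at this
    rw [this, sub_smul, algebraMap_smul]
    abel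
  rw [hsplit]
  exact sub_smul_mem_map_smul_defectSpan hmem hmul hadd halg I hr v hv

theorem smul_eq_smul_of_map_le_jacobson [IsNoetherian S N] (I : Ideal R)
    (hI : ∀ s : S, ∃ r : R, s - algebraMap R S r ∈ I.map (algebraMap R S))
    (hjac : I.map (algebraMap R S) ≤ Ideal.jacobson ⊥) :
    ∀ s, ∀ v ∈ V, smul s v = s • v := by
  have hbot : defectSpan V smul = ⊥ :=
    eq_bot_of_le_smul_of_le_jacobson_bot _ _ (IsNoetherian.noetherian _)
      (defectSpan_le_map_smul hmem hmul hadd halg I hI) hjac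
  intro s v hv
  have := sub_smul_mem_defectSpan (smul := smul) s hv
  rwa [hbot, mem_bot, sub_eq_zero] at this

end Defect

theorem HasCompatibleSMulOn.smul_mem [IsNoetherian S N] {V : Submodule R N}
    (hV : HasCompatibleSMulOn R S N V) (I : Ideal R)
    (hI : ∀ s : S, ∃ r : R, s - algebraMap R S r ∈ I.map (algebraMap R S))
    (hjac : I.map (algebraMap R S) ≤ Ideal.jacobson ⊥) :
    ∀ s : S, ∀ v ∈ V, s • v ∈ V := by
  obtain ⟨smul, hmem, -, hmul, -, hadd, -, -, halg⟩ := hV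
  intro s v hv
  rw [← smul_eq_smul_of_map_le_jacobson hmem hmul hadd halg I hI hjac s v hv]
  exact hmem s v hv

end CompatibleAction

theorem stmt_4_general (R S : Type*) [CommRing R] [CommRing S]
    [IsNoetherianRing S] [IsLocalRing R] [IsLocalRing S]
    [Algebra R S]
    (h1 : (IsLocalRing.maximalIdeal R).map (algebraMap R S) = IsLocalRing.maximalIdeal S)
    (h2 : ∀ s : S, ∃ r : R, s - algebraMap R S r ∈ IsLocalRing.maximalIdeal S)
    (N : Type*) [AddCommGroup N] [Module S N] [Module R N] [IsScalarTower R S N]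
    [Module.Finite S N]
    (M : Submodule R N)
    (W : Set N) (hW : W = {x : N | ∀ s : S, s • x ∈ M}) :
    -- W is an R-submodule of M admitting a compatible S-module structure:
    (∃ VW : Submodule R N, (VW : Set N) = W ∧ VW ≤ M ∧ HasCompatibleSMulOn R S N VW) ∧
    -- W is S-stable:
    (∀ s : S, ∀ x ∈ W, s • x ∈ W) ∧
    -- every R-submodule of M with a compatible S-module structure is an
    -- S-submodule of N contained in M, and is contained in W:
    (∀ V : Submodule R N, V ≤ M → HasCompatibleSMulOn R S N V →
      (∀ s : S, ∀ v ∈ V, s • v ∈ V) ∧ (V : Set N) ⊆ W) := by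
  subst hW
  refine ⟨⟨(Submodule.core S M).restrictScalars R, rfl, Submodule.core_le M,
    hasCompatibleSMulOn_restrictScalars _⟩, fun s x hx => (Submodule.core S M).smul_mem s hx,
    fun V hVM hV => ?_⟩
  have hstable := hV.smul_mem _ (h1 ▸ h2) (h1 ▸ IsLocalRing.maximalIdeal_le_jacobson ⊥)
  exact ⟨hstable, fun v hv s => hVM (hstable s v hv)⟩

theorem stmt_4 (R S : Type*) [CommRing R] [CommRing S]
    [IsNoetherianRing R] [IsNoetherianRing S] [IsLocalRing R] [IsLocalRing S]
    [Algebra R S] [IsLocalHom (algebraMap R S)]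
    (h1 : (IsLocalRing.maximalIdeal R).map (algebraMap R S) = IsLocalRing.maximalIdeal S)
    (h2 : ∀ s : S, ∃ r : R, s - algebraMap R S r ∈ IsLocalRing.maximalIdeal S)
    (N : Type*) [AddCommGroup N] [Module S N] [Module R N] [IsScalarTower R S N]
    [Module.Finite S N]
    (M : Submodule R N)
    (W : Set N) (hW : W = {x : N | ∀ s : S, s • x ∈ M}) :
    -- W is an R-submodule of M admitting a compatible S-module structure:
    (∃ VW : Submodule R N, (VW : Set N) = W ∧ VW ≤ M ∧ HasCompatibleSMulOn R S N VW) ∧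
    -- W is S-stable:
    (∀ s : S, ∀ x ∈ W, s • x ∈ W) ∧
    -- every R-submodule of M with a compatible S-module structure is an
    -- S-submodule of N contained in M, and is contained in W:
    (∀ V : Submodule R N, V ≤ M → HasCompatibleSMulOn R S N V →
      (∀ s : S, ∀ v ∈ V, s • v ∈ V) ∧ (V : Set N) ⊆ W) :=
  stmt_4_general R S h1 h2 N M W hW
end

section
/- Let φ: R → S be a local homomorphism of Noetherian local rings satisfying condition (†), let L be any S-module, and let M be an R-submodule of a finitely generated S-module with V(M) its largest S-submodule. Then the natural injection Hom_R(L, V(M)) → Hom_R(L, M) is an isomorphism. -/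
/-!
Every `R`-linear map `f : L → N` is automatically `S`-linear. For fixed `x`, the defect
`D s = s • f x - f (s • x)` is `R`-linear on `S` and kills `1`, hence kills `R · 1`. Since
`S = R · 1 + m S`, the `S`-span `W` of its image satisfies `W ⊆ m W = n W`, so `W = 0` by
Nakayama. Consequently an `R`-linear map into `M` takes values in `V(M)`.
-/

open IsLocalRing

section

variable {R S : Type*} [CommRing R] [CommRing S] [IsLocalRing R] [IsLocalRing S] [Algebra R S]
  (hmax : (maximalIdeal R).map (algebraMap R S) = maximalIdeal S)
  (hres : ∀ s : S, ∃ r : R, s - algebraMap R S r ∈ maximalIdeal S)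
include hmax hres

theorem exists_sub_algebraMap_mem_maximalIdeal_smul_top (s : S) :
    ∃ r : R, s - algebraMap R S r ∈ maximalIdeal R • (⊤ : Submodule R S) := by
  obtain ⟨r, hr⟩ := hres s
  refine ⟨r, ?_⟩
  rwa [Ideal.smul_top_eq_map, hmax, Submodule.restrictScalars_mem]

variable {N : Type*} [AddCommGroup N] [Module S N] [Module R N] [IsScalarTower R S N]
  [IsNoetherian S N]

theorem LinearMap.eq_zero_of_map_one_eq_zero_of_map_maximalIdeal_eq (D : S →ₗ[R] N)
    (hD : D 1 = 0) : D = 0 := by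
  set W := Submodule.span S (Set.range D)
  have hW : W ≤ maximalIdeal S • W := by
    refine Submodule.span_le.mpr ?_
    rintro _ ⟨s, rfl⟩
    obtain ⟨r, hr⟩ := exists_sub_algebraMap_mem_maximalIdeal_smul_top hmax hres s
    have hDs : D s = D (s - algebraMap R S r) := by
      rw [map_sub, Algebra.algebraMap_eq_smul_one, map_smul, hD, smul_zero, sub_zero]
    have hrange : LinearMap.range D ≤ W.restrictScalars R := by
      rintro _ ⟨t, rfl⟩
      exact Submodule.subset_span ⟨t, rfl⟩
    have : D s ∈ maximalIdeal R • W.restrictScalars R := by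
      rw [hDs]
      refine Submodule.smul_mono le_rfl hrange ?_
      rw [← Submodule.map_top, ← Submodule.map_smul'']
      exact Submodule.mem_map_of_mem hr
    rwa [← Ideal.smul_restrictScalars, hmax] at this
  have hW0 : W = ⊥ := Submodule.eq_bot_of_le_smul_of_le_jacobson_bot _ W
    (IsNoetherian.noetherian W) hW (maximalIdeal_le_jacobson ⊥)
  ext s
  exact (Submodule.eq_bot_iff W).mp hW0 (D s) (Submodule.subset_span ⟨s, rfl⟩)

variable {L : Type*} [AddCommGroup L] [Module S L] [Module R L] [IsScalarTower R S L]

theorem LinearMap.map_smul_of_map_maximalIdeal_eq (f : L →ₗ[R] N) (s : S) (x : L) :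
    f (s • x) = s • f x := by
  let D : S →ₗ[R] N := (LinearMap.toSpanSingleton S N (f x)).restrictScalars R -
    f ∘ₗ (LinearMap.toSpanSingleton S L x).restrictScalars R
  have hD : D = 0 :=
    LinearMap.eq_zero_of_map_one_eq_zero_of_map_maximalIdeal_eq hmax hres D (by simp [D])
  exact (sub_eq_zero.mp (LinearMap.congr_fun hD s)).symm

end

theorem stmt_5_general (R S : Type*) [CommRing R] [CommRing S]
    [IsNoetherianRing S] [IsLocalRing R] [IsLocalRing S]
    [Algebra R S]
    (h1 : (IsLocalRing.maximalIdeal R).map (algebraMap R S) = IsLocalRing.maximalIdeal S)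
    (h2 : ∀ s : S, ∃ r : R, s - algebraMap R S r ∈ IsLocalRing.maximalIdeal S)
    (L : Type*) [AddCommGroup L] [Module S L] [Module R L] [IsScalarTower R S L]
    (N : Type*) [AddCommGroup N] [Module S N] [Module R N] [IsScalarTower R S N]
    [Module.Finite S N]
    (M : Submodule R N)
    (VM : Submodule R N) (hVM : ∀ x : N, x ∈ VM ↔ ∀ s : S, s • x ∈ M)
    (hle : VM ≤ M) :
    Function.Bijective
      (fun f : L →ₗ[R] VM => (Submodule.inclusion hle).comp f : (L →ₗ[R] VM) → (L →ₗ[R] M)) := by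
  refine ⟨fun f g hfg => (LinearMap.cancel_left (Submodule.inclusion_injective hle)).mp hfg,
    fun F => ?_⟩
  have hF : ∀ x, (F x : N) ∈ VM := fun x => (hVM _).mpr fun s => by
    have hS : (F (s • x) : N) = s • F x :=
      LinearMap.map_smul_of_map_maximalIdeal_eq h1 h2 (M.subtype ∘ₗ F) s x
    exact hS ▸ (F (s • x)).2
  exact ⟨(M.subtype ∘ₗ F).codRestrict VM hF, rfl⟩

theorem stmt_5 (R S : Type*) [CommRing R] [CommRing S]
    [IsNoetherianRing R] [IsNoetherianRing S] [IsLocalRing R] [IsLocalRing S]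
    [Algebra R S] [IsLocalHom (algebraMap R S)]
    (h1 : (IsLocalRing.maximalIdeal R).map (algebraMap R S) = IsLocalRing.maximalIdeal S)
    (h2 : ∀ s : S, ∃ r : R, s - algebraMap R S r ∈ IsLocalRing.maximalIdeal S)
    (L : Type*) [AddCommGroup L] [Module S L] [Module R L] [IsScalarTower R S L]
    (N : Type*) [AddCommGroup N] [Module S N] [Module R N] [IsScalarTower R S N]
    [Module.Finite S N]
    (M : Submodule R N)
    (VM : Submodule R N) (hVM : ∀ x : N, x ∈ VM ↔ ∀ s : S, s • x ∈ M)
    (hle : VM ≤ M) :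
    Function.Bijective
      (fun f : L →ₗ[R] VM => (Submodule.inclusion hle).comp f : (L →ₗ[R] VM) → (L →ₗ[R] M)) :=
  stmt_5_general R S h1 h2 L N M VM hVM hle
end

section
/- Let φ: R → S be a local homomorphism of Noetherian local rings satisfying condition (†), and let M be an R-submodule of a finitely generated S-module N with V(M) = {x ∈ N : Sx ⊆ M}. Then the image of the evaluation map ε: Hom_R(S,M) → M, ψ ↦ ψ(1), is exactly V(M), and ε induces an isomorphism Hom_R(S,M) ≅ V(M). In particular, if M is finitely generated over R, then Hom_R(S,M) is finitely generated over R. -/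
/-!
Write `𝔪`, `𝔫` for the maximal ideals of `R`, `S`. For an `R`-linear `d : S → N` with `d 1 = 0`,
let `D` be the `S`-submodule of `N` spanned by the values of `d`. Since `S = R + 𝔫` and
`𝔫 = 𝔪S`, every value `d s = d (s - r)` lies in `d (𝔪S) = 𝔪 • d S ⊆ 𝔫D`, so `D = 𝔫D` and
Nakayama gives `D = 0`. Applied to `ψ - (s ↦ s • ψ 1)`, this shows that every `R`-linear
`ψ : S → N` is `S`-linear, so `ψ` is determined by `ψ 1`, which can be any `x` with `Sx ⊆ M`.
Finiteness follows because `ψ ↦ ψ 1` embeds `Hom_R(S, M)` into the Noetherian module `M`.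
-/

open IsLocalRing

section

variable {R S : Type*} [CommRing R] [CommRing S] [IsLocalRing R] [IsLocalRing S] [Algebra R S]
  {N : Type*} [AddCommGroup N] [Module S N] [Module R N] [IsScalarTower R S N] [IsNoetherian S N]

theorem LinearMap.eq_zero_of_map_one_eq_zero
    (hmap : (maximalIdeal R).map (algebraMap R S) = maximalIdeal S)
    (hres : ∀ s : S, ∃ r : R, s - algebraMap R S r ∈ maximalIdeal S)
    (d : S →ₗ[R] N) (hd : d 1 = 0) : d = 0 := by
  set D := Submodule.span S (Set.range d)
  have map_mem_maximalIdeal_smul : ∀ t ∈ maximalIdeal S, d t ∈ maximalIdeal S • D := by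
    rw [← hmap]
    intro t ht
    rw [← Submodule.restrictScalars_mem R, ← Ideal.smul_top_eq_map] at ht
    refine Submodule.smul_induction_on ht (fun r hr s _ => ?_) (fun _ _ hx hy => ?_)
    · rw [map_smul, ← algebraMap_smul S r (d s)]
      exact Submodule.smul_mem_smul (Ideal.mem_map_of_mem _ hr) (Submodule.subset_span ⟨s, rfl⟩)
    · rw [map_add]
      exact add_mem hx hy
  have hD : D ≤ maximalIdeal S • D := by
    refine Submodule.span_le.mpr ?_
    rintro _ ⟨s, rfl⟩
    obtain ⟨r, hr⟩ := hres s
    have hdr : d (algebraMap R S r) = 0 := by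
      rw [Algebra.algebraMap_eq_smul_one, map_smul, hd, smul_zero]
    simpa only [map_sub, hdr, sub_zero, SetLike.mem_coe] using map_mem_maximalIdeal_smul _ hr
  have hD_bot : D = ⊥ := Submodule.eq_bot_of_le_smul_of_le_jacobson_bot _ D
    (IsNoetherian.noetherian D) hD (jacobson_eq_maximalIdeal ⊥ bot_ne_top).ge
  ext s
  exact (Submodule.eq_bot_iff D).mp hD_bot _ (Submodule.subset_span ⟨s, rfl⟩)

theorem LinearMap.map_eq_smul_map_one
    (hmap : (maximalIdeal R).map (algebraMap R S) = maximalIdeal S)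
    (hres : ∀ s : S, ∃ r : R, s - algebraMap R S r ∈ maximalIdeal S)
    (ψ : S →ₗ[R] N) (s : S) : ψ s = s • ψ 1 := by
  have h := (ψ - (LinearMap.toSpanSingleton S N (ψ 1)).restrictScalars R).eq_zero_of_map_one_eq_zero
    hmap hres (by simp)
  simpa [sub_eq_zero] using LinearMap.congr_fun h s

theorem Submodule.coe_apply_eq_smul_coe_apply_one
    (hmap : (maximalIdeal R).map (algebraMap R S) = maximalIdeal S)
    (hres : ∀ s : S, ∃ r : R, s - algebraMap R S r ∈ maximalIdeal S) {M : Submodule R N}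
    (ψ : S →ₗ[R] M) (s : S) : (ψ s : N) = s • (ψ 1 : N) :=
  (M.subtype ∘ₗ ψ).map_eq_smul_map_one hmap hres s

theorem Submodule.range_coe_apply_one_eq
    (hmap : (maximalIdeal R).map (algebraMap R S) = maximalIdeal S)
    (hres : ∀ s : S, ∃ r : R, s - algebraMap R S r ∈ maximalIdeal S) (M : Submodule R N) :
    Set.range (fun ψ : S →ₗ[R] M => ((ψ 1 : M) : N)) = {x | ∀ s : S, s • x ∈ M} := by
  ext x
  constructor
  · rintro ⟨ψ, rfl⟩ s
    rw [← coe_apply_eq_smul_coe_apply_one hmap hres ψ s]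
    exact (ψ s).2
  · intro hx
    exact ⟨((LinearMap.toSpanSingleton S N x).restrictScalars R).codRestrict M hx, one_smul S x⟩

theorem Submodule.injective_coe_apply_one
    (hmap : (maximalIdeal R).map (algebraMap R S) = maximalIdeal S)
    (hres : ∀ s : S, ∃ r : R, s - algebraMap R S r ∈ maximalIdeal S) (M : Submodule R N) :
    Function.Injective (fun ψ : S →ₗ[R] M => ((ψ 1 : M) : N)) := by
  intro ψ ψ' h
  ext s
  rw [coe_apply_eq_smul_coe_apply_one hmap hres ψ s, coe_apply_eq_smul_coe_apply_one hmap hres ψ' s]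
  exact congrArg (s • ·) h

theorem Submodule.finite_linearMap_of_finite [IsNoetherianRing R]
    (hmap : (maximalIdeal R).map (algebraMap R S) = maximalIdeal S)
    (hres : ∀ s : S, ∃ r : R, s - algebraMap R S r ∈ maximalIdeal S)
    (M : Submodule R N) [Module.Finite R M] : Module.Finite R (S →ₗ[R] M) :=
  Module.Finite.of_injective (LinearMap.applyₗ (1 : S))
    fun _ _ h => M.injective_coe_apply_one hmap hres (congrArg Subtype.val h)

end

theorem stmt_6_general (R S : Type*) [CommRing R] [CommRing S]
    [IsNoetherianRing R] [IsNoetherianRing S] [IsLocalRing R] [IsLocalRing S]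
    [Algebra R S]
    (h1 : (IsLocalRing.maximalIdeal R).map (algebraMap R S) = IsLocalRing.maximalIdeal S)
    (h2 : ∀ s : S, ∃ r : R, s - algebraMap R S r ∈ IsLocalRing.maximalIdeal S)
    (N : Type*) [AddCommGroup N] [Module S N] [Module R N] [IsScalarTower R S N]
    [Module.Finite S N]
    (M : Submodule R N)
    (VM : Submodule R N) (hVM : ∀ x : N, x ∈ VM ↔ ∀ s : S, s • x ∈ M) :
    -- the image of the evaluation map ψ ↦ ψ(1) is exactly V(M)
    (Set.range (fun ψ : S →ₗ[R] M => ((ψ 1 : M) : N)) = (VM : Set N)) ∧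
    -- the evaluation map is injective, hence induces an isomorphism Hom_R(S,M) ≅ V(M)
    Function.Injective (fun ψ : S →ₗ[R] M => ((ψ 1 : M) : N)) ∧
    -- if M is finitely generated over R then so is Hom_R(S,M)
    (Module.Finite R M → Module.Finite R (S →ₗ[R] M)) := by
  refine ⟨?_, M.injective_coe_apply_one h1 h2, fun _ => M.finite_linearMap_of_finite h1 h2⟩
  rw [M.range_coe_apply_one_eq h1 h2]
  exact Set.ext fun x => (hVM x).symm

theorem stmt_6 (R S : Type*) [CommRing R] [CommRing S]
    [IsNoetherianRing R] [IsNoetherianRing S] [IsLocalRing R] [IsLocalRing S]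
    [Algebra R S] [IsLocalHom (algebraMap R S)]
    (h1 : (IsLocalRing.maximalIdeal R).map (algebraMap R S) = IsLocalRing.maximalIdeal S)
    (h2 : ∀ s : S, ∃ r : R, s - algebraMap R S r ∈ IsLocalRing.maximalIdeal S)
    (N : Type*) [AddCommGroup N] [Module S N] [Module R N] [IsScalarTower R S N]
    [Module.Finite S N]
    (M : Submodule R N)
    (VM : Submodule R N) (hVM : ∀ x : N, x ∈ VM ↔ ∀ s : S, s • x ∈ M) :
    -- the image of the evaluation map ψ ↦ ψ(1) is exactly V(M)
    (Set.range (fun ψ : S →ₗ[R] M => ((ψ 1 : M) : N)) = (VM : Set N)) ∧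
    -- the evaluation map is injective, hence induces an isomorphism Hom_R(S,M) ≅ V(M)
    Function.Injective (fun ψ : S →ₗ[R] M => ((ψ 1 : M) : N)) ∧
    -- if M is finitely generated over R then so is Hom_R(S,M)
    (Module.Finite R M → Module.Finite R (S →ₗ[R] M)) :=
  stmt_6_general R S h1 h2 N M VM hVM
end

section
/- Let φ: R → S be a local homomorphism of Noetherian local rings satisfying condition (†), and let M be a finitely generated R-module. The following are equivalent: (1) M admits an S-module structure compatible with its R-module structure via φ; (2) the natural map ι: M → S ⊗_R M, x ↦ 1⊗x, is bijective; (3) the evaluation map ε: Hom_R(S,M) → M, ψ ↦ ψ(1), is bijective. -/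
/-!
Condition (†) says `S = φ(R) + m S` as an `R`-module, hence `S = φ(R) + mᵏ S` for every `k`.
So an `R`-linear map from `S` to an `m`-adically separated module that vanishes at `1` has its
image in `⋂ₖ mᵏ N = 0`. By Krull's intersection theorem this applies to `M`, which makes `ε`
injective, and to `S ⊗_R M` (separated for `n = m S` over the Noetherian local ring `S`): given
an `S`-structure on `M`, the map `s ↦ s ⊗ x - 1 ⊗ s x` vanishes, which makes `ι` surjective.
The remaining implications transport an `S`-structure along `ι` or `ε`.
-/

/-- An R-module `M` "has an S-module structure compatible with its R-module
structure" if there is an S-scalar multiplication on `M` satisfying the module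
axioms and with `r • x = φ(r) ∘ x` for all `r : R`, `x : M`. -/
def HasCompatibleSModule (R S M : Type*) [CommRing R] [CommRing S] [Algebra R S]
    [AddCommGroup M] [Module R M] : Prop :=
  ∃ smul : S → M → M,
    (∀ x, smul 1 x = x) ∧
    (∀ s t x, smul (s * t) x = smul s (smul t x)) ∧
    (∀ s x y, smul s (x + y) = smul s x + smul s y) ∧
    (∀ s t x, smul (s + t) x = smul s x + smul t x) ∧
    (∀ r : R, ∀ x, smul (algebraMap R S r) x = r • x)

open IsLocalRing TensorProduct

section

variable {R S : Type*} [CommRing R] [CommRing S] [Algebra R S]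

theorem range_algebraLinearMap_sup_smul_top_eq_top {I : Ideal R}
    (hI : ∀ s : S, ∃ r : R, s - algebraMap R S r ∈ I.map (algebraMap R S)) :
    LinearMap.range (Algebra.linearMap R S) ⊔ I • ⊤ = ⊤ := by
  refine eq_top_iff.mpr fun s _ => ?_
  obtain ⟨r, hr⟩ := hI s
  rw [← sub_add_cancel s (algebraMap R S r), add_comm]
  refine Submodule.add_mem_sup ⟨r, rfl⟩ ?_
  rwa [Ideal.smul_top_eq_map]

theorem LinearMap.ext_ring_of_isHausdorff {N : Type*} [AddCommGroup N] [Module R N]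
    {I : Ideal R} [IsHausdorff I N]
    (hS : LinearMap.range (Algebra.linearMap R S) ⊔ I • ⊤ = ⊤)
    {f g : S →ₗ[R] N} (h : f 1 = g 1) : f = g := by
  rw [← sub_eq_zero, ← LinearMap.range_eq_bot, eq_bot_iff]
  set δ := f - g
  have hδ : LinearMap.range (Algebra.linearMap R S) ≤ LinearMap.ker δ := by
    rintro _ ⟨r, rfl⟩
    simp [δ, Algebra.algebraMap_eq_smul_one, h]
  have hrange : LinearMap.range δ = I • LinearMap.range δ := by
    conv_lhs => rw [LinearMap.range_eq_map, ← hS, Submodule.map_sup, Submodule.map_smul'',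
      LinearMap.le_ker_iff_map.mp hδ, bot_sup_eq, ← LinearMap.range_eq_map]
  have hpow : ∀ n : ℕ, LinearMap.range δ ≤ I ^ n • ⊤ := by
    intro n
    induction n with
    | zero => simp
    | succ n ih =>
      calc LinearMap.range δ = I • LinearMap.range δ := hrange
        _ ≤ I • (I ^ n • ⊤) := Submodule.smul_mono le_rfl ih
        _ = I ^ (n + 1) • ⊤ := by rw [pow_succ', Submodule.mul_smul]
  intro x hx
  exact IsHausdorff.haus ‹_› x fun n => SModEq.zero.mpr (hpow n hx)

section CompatibleModule

variable {M : Type*} [AddCommGroup M] [Module R M]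

theorem HasCompatibleSModule.exists_module (h : HasCompatibleSModule R S M) :
    ∃ _ : Module S M, IsScalarTower R S M := by
  obtain ⟨smul, one_smul, mul_smul, smul_add, add_smul, algebraMap_smul⟩ := h
  let _ : SMul S M := ⟨smul⟩
  refine ⟨Module.ofMinimalAxioms smul_add add_smul mul_smul one_smul, ⟨fun r s x => ?_⟩⟩
  change smul (r • s) x = r • smul s x
  rw [Algebra.smul_def, mul_smul, algebraMap_smul]

theorem HasCompatibleSModule.of_linearEquiv {N : Type*} [AddCommGroup N] [Module R N]
    [Module S N] [IsScalarTower R S N] (e : M ≃ₗ[R] N) : HasCompatibleSModule R S M :=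
  ⟨fun s x => e.symm (s • e x), by simp, by simp [mul_smul], by simp, by simp [add_smul],
    by simp⟩

theorem HasCompatibleSModule.of_bijective_eval_one
    (h : Function.Bijective fun ψ : S →ₗ[R] M => ψ 1) : HasCompatibleSModule R S M := by
  let e := LinearEquiv.ofBijective (LinearMap.applyₗ (1 : S)) h
  have e_apply (ψ : S →ₗ[R] M) : e ψ = ψ 1 := rfl
  have eval_symm (x : M) : e.symm x 1 = x := e.apply_symm_apply x
  have symm_apply_comp_mulLeft (x : M) (t : S) :
      e.symm (e.symm x t) = (e.symm x).comp (LinearMap.mulLeft R t) :=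
    e.symm_apply_eq.mpr (by simp [e_apply])
  refine ⟨fun s x => e.symm x s, eval_symm, fun s t x => ?_, by simp, by simp, fun r x => ?_⟩
  · simp [symm_apply_comp_mulLeft, mul_comm]
  · simp [Algebra.algebraMap_eq_smul_one, eval_symm]

theorem injective_one_tmul [Module S M] [IsScalarTower R S M] :
    Function.Injective fun x : M => (1 : S) ⊗ₜ[R] x :=
  Function.LeftInverse.injective (g := LinearMap.id.liftBaseChange S) fun x => by simp

theorem surjective_eval_one [Module S M] [IsScalarTower R S M] :
    Function.Surjective fun ψ : S →ₗ[R] M => ψ 1 :=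
  fun x => ⟨(LinearMap.toSpanSingleton S M x).restrictScalars R, one_smul S x⟩

end CompatibleModule

section AdicallySeparated

variable {M : Type*} [AddCommGroup M] [Module R M] {I : Ideal R}
  (hS : LinearMap.range (Algebra.linearMap R S) ⊔ I • ⊤ = ⊤)
include hS

theorem injective_eval_one_of_isHausdorff [IsHausdorff I M] :
    Function.Injective fun ψ : S →ₗ[R] M => ψ 1 :=
  fun _ _ h => LinearMap.ext_ring_of_isHausdorff hS h

theorem surjective_one_tmul_of_isHausdorff [Module S M] [IsScalarTower R S M]
    [IsHausdorff I (S ⊗[R] M)] : Function.Surjective fun x : M => (1 : S) ⊗ₜ[R] x := by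
  have tmul_eq (s : S) (x : M) : s ⊗ₜ[R] x = (1 : S) ⊗ₜ[R] (s • x) := by
    let f : S →ₗ[R] S ⊗[R] M := (TensorProduct.mk R S M).flip x
    let g : S →ₗ[R] S ⊗[R] M :=
      (TensorProduct.mk R S M 1).comp ((LinearMap.toSpanSingleton S M x).restrictScalars R)
    have hfg : f = g := LinearMap.ext_ring_of_isHausdorff hS (by simp [f, g])
    exact LinearMap.congr_fun hfg s
  change Function.Surjective (TensorProduct.mk R S M 1)
  rw [← LinearMap.range_eq_top, Submodule.eq_top_iff']
  intro z
  induction z with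
  | zero => exact zero_mem _
  | tmul s x => exact ⟨s • x, (tmul_eq s x).symm⟩
  | add z w hz hw => exact add_mem hz hw

end AdicallySeparated

end

theorem stmt_7_general (R S : Type*) [CommRing R] [CommRing S]
    [IsNoetherianRing R] [IsNoetherianRing S] [IsLocalRing R] [IsLocalRing S]
    [Algebra R S]
    (h1 : (IsLocalRing.maximalIdeal R).map (algebraMap R S) = IsLocalRing.maximalIdeal S)
    (h2 : ∀ s : S, ∃ r : R, s - algebraMap R S r ∈ IsLocalRing.maximalIdeal S)
    (M : Type*) [AddCommGroup M] [Module R M] [Module.Finite R M] :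
    (HasCompatibleSModule R S M ↔
      Function.Bijective (fun x : M => (1 : S) ⊗ₜ[R] x)) ∧
    (Function.Bijective (fun x : M => (1 : S) ⊗ₜ[R] x) ↔
      Function.Bijective (fun ψ : S →ₗ[R] M => ψ 1)) := by
  have hS : LinearMap.range (Algebra.linearMap R S) ⊔ maximalIdeal R • ⊤ = ⊤ :=
    range_algebraLinearMap_sup_smul_top_eq_top (by rwa [h1])
  have compatible_imp_bijective (hM : HasCompatibleSModule R S M) :
      Function.Bijective fun x : M => (1 : S) ⊗ₜ[R] x := by
    obtain ⟨_, _⟩ := hM.exists_module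
    have : IsHausdorff (maximalIdeal R) (S ⊗[R] M) := .of_map h1.le
    exact ⟨injective_one_tmul, surjective_one_tmul_of_isHausdorff hS⟩
  have bijective_imp_compatible (hι : Function.Bijective fun x : M => (1 : S) ⊗ₜ[R] x) :
      HasCompatibleSModule R S M :=
    .of_linearEquiv (LinearEquiv.ofBijective (TensorProduct.mk R S M 1) hι)
  refine ⟨⟨compatible_imp_bijective, bijective_imp_compatible⟩,
    fun hι => ?_, fun hε => ?_⟩
  · obtain ⟨_, _⟩ := (bijective_imp_compatible hι).exists_module
    exact ⟨injective_eval_one_of_isHausdorff hS, surjective_eval_one⟩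
  · exact compatible_imp_bijective (.of_bijective_eval_one hε)

theorem stmt_7 (R S : Type*) [CommRing R] [CommRing S]
    [IsNoetherianRing R] [IsNoetherianRing S] [IsLocalRing R] [IsLocalRing S]
    [Algebra R S] [IsLocalHom (algebraMap R S)]
    (h1 : (IsLocalRing.maximalIdeal R).map (algebraMap R S) = IsLocalRing.maximalIdeal S)
    (h2 : ∀ s : S, ∃ r : R, s - algebraMap R S r ∈ IsLocalRing.maximalIdeal S)
    (M : Type*) [AddCommGroup M] [Module R M] [Module.Finite R M] :
    (HasCompatibleSModule R S M ↔
      Function.Bijective (fun x : M => (1 : S) ⊗ₜ[R] x)) ∧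
    (Function.Bijective (fun x : M => (1 : S) ⊗ₜ[R] x) ↔
      Function.Bijective (fun ψ : S →ₗ[R] M => ψ 1)) :=
  stmt_7_general R S h1 h2 M
end

section
/- Let φ: R → S be a flat local homomorphism of Noetherian local rings satisfying condition (†), and let M be a finitely generated R-module. Then M admits a compatible S-module structure if and only if S ⊗_R M is finitely generated as an R-module. -/
open TensorProduct IsLocalRing

namespace HasCompatibleSModule

variable {R S M : Type*} [CommRing R] [CommRing S] [Algebra R S] [AddCommGroup M] [Module R M]

theorem exists_isScalarTower (h : HasCompatibleSModule R S M) :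
    ∃ _ : Module S M, IsScalarTower R S M := by
  obtain ⟨smul, one_smul, mul_smul, smul_add, add_smul, algebraMap_smul⟩ := h
  let _ : Module S M :=
    { smul, one_smul, mul_smul, smul_add, add_smul
      smul_zero s := by
        change smul s 0 = 0
        simpa using smul_add s 0 0
      zero_smul x := by
        change smul 0 x = 0
        simpa using algebraMap_smul 0 x }
  refine ⟨‹_›, ⟨fun r s x => ?_⟩⟩
  change smul (r • s) x = r • smul s x
  rw [Algebra.smul_def, mul_smul, algebraMap_smul]

theorem of_linearEquiv_s8 {N : Type*} [AddCommGroup N] [Module R N] [Module S N]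
    [IsScalarTower R S N] (e : M ≃ₗ[R] N) : HasCompatibleSModule R S M :=
  ⟨fun s x => e.symm (s • e x), by simp, by simp [mul_smul], by simp, by simp [add_smul],
    by simp⟩

end HasCompatibleSModule

section

variable {R S : Type*} [CommRing R] [CommRing S] [Algebra R S]
  {M : Type*} [AddCommGroup M] [Module R M]

theorem TensorProduct.range_mk_one_sup_smul_top {I : Ideal R}
    (hI : ∀ s : S, ∃ r : R, s - algebraMap R S r ∈ I.map (algebraMap R S)) :
    LinearMap.range (mk R S M 1) ⊔ I • ⊤ = ⊤ := by
  rw [eq_top_iff]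
  rintro x -
  induction x using TensorProduct.induction_on with
  | zero => exact zero_mem _
  | add x y hx hy => exact add_mem hx hy
  | tmul s m =>
    obtain ⟨r, hr⟩ := hI s
    have hsplit : s ⊗ₜ[R] m = 1 ⊗ₜ (r • m) + (s - algebraMap R S r) ⊗ₜ m := by
      rw [← smul_tmul, ← Algebra.algebraMap_eq_smul_one, ← add_tmul, add_sub_cancel]
    have hsmul : (s - algebraMap R S r) ⊗ₜ[R] m ∈ I • (⊤ : Submodule R (S ⊗[R] M)) := by
      rw [← Submodule.restrictScalars_mem R, ← Ideal.smul_top_eq_map] at hr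
      have := Submodule.mem_map_of_mem (f := (mk R S M).flip m) hr
      rw [Submodule.map_smul''] at this
      exact Submodule.smul_mono le_rfl le_top this
    rw [hsplit]
    exact add_mem (Submodule.mem_sup_left ⟨r • m, rfl⟩) (Submodule.mem_sup_right hsmul)

theorem LinearMap.range_eq_smul_range_of_le_ker {N N' : Type*} [AddCommGroup N] [Module R N]
    [AddCommGroup N'] [Module R N'] {I : Ideal R} {P : Submodule R N} (hP : P ⊔ I • ⊤ = ⊤)
    (f : N →ₗ[R] N') (hf : P ≤ ker f) : range f = I • range f := by
  calc range f = (P ⊔ I • ⊤).map f := by rw [hP, Submodule.map_top]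
    _ = I • range f := by
      rw [Submodule.map_sup, Submodule.map_smul'', Submodule.map_top,
        le_bot_iff.mp (Submodule.map_le_iff_le_comap.mpr hf), bot_sup_eq]

theorem TensorProduct.mk_one_surjective_of_isScalarTower [Module S M] [IsScalarTower R S M]
    [IsNoetherianRing S] [Module.Finite R M] {I : Ideal R}
    (hI : LinearMap.range (mk R S M 1) ⊔ I • ⊤ = ⊤)
    (hjac : I.map (algebraMap R S) ≤ Ideal.jacobson ⊥) :
    Function.Surjective (mk R S M 1) := by
  set μ := (LinearMap.id : M →ₗ[R] M).liftBaseChange S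
  have hμ : ∀ x, μ (1 ⊗ₜ x) = x := by simp [μ]
  -- the projection of `S ⊗ M` onto `ker μ` along `1 ⊗ M`
  let π : S ⊗[R] M →ₗ[R] S ⊗[R] M :=
    LinearMap.id - mk R S M 1 ∘ₗ μ.restrictScalars R
  have hπ : LinearMap.range π = (LinearMap.ker μ).restrictScalars R := by
    apply le_antisymm
    · rintro _ ⟨z, rfl⟩
      simp [π, hμ]
    · intro z hz
      exact ⟨z, by simp [π, show μ z = 0 from hz]⟩
  have hker : LinearMap.ker μ = ⊥ := by
    refine Submodule.eq_bot_of_le_smul_of_le_jacobson_bot _ _ (IsNoetherian.noetherian _) ?_ hjac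
    rw [← Submodule.restrictScalars_le R, Ideal.smul_restrictScalars, ← hπ]
    exact (LinearMap.range_eq_smul_range_of_le_ker hI π
      (by rintro _ ⟨m, rfl⟩; simp [π, hμ])).le
  intro z
  have hπz : π z ∈ LinearMap.ker μ := hπ.le (LinearMap.mem_range_self π z)
  rw [hker, Submodule.mem_bot] at hπz
  exact ⟨μ z, (sub_eq_zero.mp hπz).symm⟩

theorem TensorProduct.mk_one_surjective_of_finite [Module.Finite R (S ⊗[R] M)] {I : Ideal R}
    (hI : LinearMap.range (mk R S M 1) ⊔ I • ⊤ = ⊤) (hjac : I ≤ Ideal.jacobson ⊥) :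
    Function.Surjective (mk R S M 1) := by
  rw [← LinearMap.range_eq_top, eq_top_iff]
  exact Submodule.le_of_le_smul_of_le_jacobson_bot (Module.finite_def.mp ‹_›) hjac hI.ge

end

theorem stmt_8_general (R S : Type*) [CommRing R] [CommRing S]
    [IsNoetherianRing S] [IsLocalRing R] [IsLocalRing S]
    [Algebra R S] [Module.Flat R S] [IsLocalHom (algebraMap R S)]
    (h1 : (IsLocalRing.maximalIdeal R).map (algebraMap R S) = IsLocalRing.maximalIdeal S)
    (h2 : ∀ s : S, ∃ r : R, s - algebraMap R S r ∈ IsLocalRing.maximalIdeal S)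
    (M : Type*) [AddCommGroup M] [Module R M] [Module.Finite R M] :
    HasCompatibleSModule R S M ↔ Module.Finite R (TensorProduct R S M) := by
  have hdecomp := range_mk_one_sup_smul_top (M := M) (h1 ▸ h2)
  constructor
  · intro h
    obtain ⟨_, _⟩ := h.exists_isScalarTower
    exact .of_surjective _
      (mk_one_surjective_of_isScalarTower hdecomp (h1 ▸ maximalIdeal_le_jacobson ⊥))
  · intro _
    have := Module.FaithfullyFlat.of_flat_of_isLocalHom (A := R) (B := S)
    exact .of_linearEquiv (S := S) (LinearEquiv.ofBijective (mk R S M 1)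
      ⟨Module.FaithfullyFlat.tensorProduct_mk_injective M,
        mk_one_surjective_of_finite hdecomp (maximalIdeal_le_jacobson ⊥)⟩)

theorem stmt_8 (R S : Type*) [CommRing R] [CommRing S]
    [IsNoetherianRing R] [IsNoetherianRing S] [IsLocalRing R] [IsLocalRing S]
    [Algebra R S] [Module.Flat R S] [IsLocalHom (algebraMap R S)]
    (h1 : (IsLocalRing.maximalIdeal R).map (algebraMap R S) = IsLocalRing.maximalIdeal S)
    (h2 : ∀ s : S, ∃ r : R, s - algebraMap R S r ∈ IsLocalRing.maximalIdeal S)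
    (M : Type*) [AddCommGroup M] [Module R M] [Module.Finite R M] :
    HasCompatibleSModule R S M ↔ Module.Finite R (TensorProduct R S M) :=
  stmt_8_general R S h1 h2 M
end

section
/- Let φ: R → S be a flat local homomorphism of Noetherian local rings satisfying condition (†), and let M be a finitely generated S-module. The following are equivalent: (1) M is finitely generated as an R-module; (2) the natural map M → S ⊗_R M, x ↦ 1⊗x, is bijective; (3) S ⊗_R M is finitely generated as an R-module. -/
/-!
The multiplication map `μ : S ⊗[R] M → M`, `s ⊗ x ↦ s • x`, is a retraction of `ι : x ↦ 1 ⊗ x`,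
so `ι` is bijective iff `μ` is injective. Since `S = φ(R) + mS`, we have
`S ⊗[R] M = ι(M) + m (S ⊗[R] M)`, and the projection `t ↦ t - ι (μ t)` onto `ker μ` kills `ι(M)`;
hence `ker μ = m ker μ = n ker μ`. When `M` is `R`-finite, `S ⊗[R] M` is `S`-finite and Nakayama
over the Noetherian ring `S` gives `ker μ = 0`. Conversely, if `μ` is an isomorphism then
`S ⊗[R] M ≅ M` is `S`-finite, and finiteness descends along the faithfully flat map `R → S`.
-/

open TensorProduct IsLocalRing

section

variable {R S M : Type*} [CommRing R] [CommRing S] [Algebra R S]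
  [AddCommGroup M] [Module R M]

lemma smul_top_sup_range_mk_one_eq_top (I : Ideal R)
    (hcover : ∀ s : S, ∃ r : R, s - algebraMap R S r ∈ I.map (algebraMap R S)) :
    I • ⊤ ⊔ LinearMap.range (mk R S M 1) = ⊤ := by
  refine Submodule.eq_top_iff'.mpr fun t => ?_
  induction t with
  | zero => exact zero_mem _
  | add u v hu hv => exact add_mem hu hv
  | tmul s x =>
    obtain ⟨r, hr⟩ := hcover s
    have hd : s - algebraMap R S r ∈ I • (⊤ : Submodule R S) := by
      rwa [Ideal.smul_top_eq_map]
    have hdx := Submodule.mem_map_of_mem (f := (mk R S M).flip x) hd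
    rw [Submodule.map_smul''] at hdx
    have hsplit : s ⊗ₜ[R] x = (s - algebraMap R S r) ⊗ₜ x + 1 ⊗ₜ (r • x) := by
      rw [tmul_smul, smul_tmul', Algebra.smul_def, mul_one, sub_tmul, sub_add_cancel]
    rw [hsplit]
    exact add_mem (Submodule.mem_sup_left (Submodule.smul_mono le_rfl le_top hdx))
      (Submodule.mem_sup_right ⟨r • x, rfl⟩)

variable [Module S M] [IsScalarTower R S M]

variable (R S M) in
noncomputable def tensorSMul : S ⊗[R] M →ₗ[S] M :=
  LinearMap.id.liftBaseChange S

@[simp]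
lemma tensorSMul_tmul (s : S) (x : M) : tensorSMul R S M (s ⊗ₜ x) = s • x := rfl

lemma tensorSMul_one_tmul (x : M) : tensorSMul R S M (1 ⊗ₜ x) = x := by
  simp

lemma tensorSMul_surjective : Function.Surjective (tensorSMul R S M) :=
  fun x => ⟨1 ⊗ₜ x, tensorSMul_one_tmul x⟩

lemma bijective_one_tmul_iff_injective_tensorSMul :
    Function.Bijective (fun x : M => (1 : S) ⊗ₜ[R] x) ↔
      Function.Injective (tensorSMul R S M) := by
  refine ⟨fun h a b hab => ?_, fun h => ⟨?_, fun t => ⟨tensorSMul R S M t, h ?_⟩⟩⟩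
  · obtain ⟨x, rfl⟩ := h.2 a
    obtain ⟨y, rfl⟩ := h.2 b
    simpa only [tensorSMul_one_tmul] using congrArg (1 ⊗ₜ[R] ·) hab
  · exact Function.LeftInverse.injective (g := tensorSMul R S M) tensorSMul_one_tmul
  · simp only [tensorSMul_one_tmul]

variable (R S M) in
noncomputable def tensorSMulKerProj : S ⊗[R] M →ₗ[R] S ⊗[R] M :=
  LinearMap.id - mk R S M 1 ∘ₗ (tensorSMul R S M).restrictScalars R

lemma tensorSMulKerProj_apply (t : S ⊗[R] M) :
    tensorSMulKerProj R S M t = t - 1 ⊗ₜ tensorSMul R S M t := rfl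

lemma tensorSMulKerProj_comp_mk_one : tensorSMulKerProj R S M ∘ₗ mk R S M 1 = 0 := by
  ext x
  simp [tensorSMulKerProj_apply]

lemma range_tensorSMulKerProj :
    LinearMap.range (tensorSMulKerProj R S M) =
      (LinearMap.ker (tensorSMul R S M)).restrictScalars R := by
  ext t
  constructor
  · rintro ⟨t, rfl⟩
    simp [tensorSMulKerProj_apply]
  · intro ht
    refine ⟨t, ?_⟩
    simp_all [tensorSMulKerProj_apply]

lemma ker_tensorSMul_restrictScalars_eq_smul (I : Ideal R)
    (hcover : ∀ s : S, ∃ r : R, s - algebraMap R S r ∈ I.map (algebraMap R S)) :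
    (LinearMap.ker (tensorSMul R S M)).restrictScalars R =
      I • (LinearMap.ker (tensorSMul R S M)).restrictScalars R := by
  set π := tensorSMulKerProj R S M
  rw [← range_tensorSMulKerProj]
  calc LinearMap.range π = Submodule.map π (I • ⊤ ⊔ LinearMap.range (mk R S M 1)) := by
        rw [smul_top_sup_range_mk_one_eq_top I hcover, LinearMap.range_eq_map]
    _ = Submodule.map π (I • ⊤) := by
        rw [Submodule.map_sup, ← LinearMap.range_comp, tensorSMulKerProj_comp_mk_one,
          LinearMap.range_zero, sup_bot_eq]
    _ = I • LinearMap.range π := by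
        rw [Submodule.map_smul'', LinearMap.range_eq_map]

lemma ker_tensorSMul_eq_bot [IsNoetherianRing S] [Module.Finite R M] (I : Ideal R)
    (hcover : ∀ s : S, ∃ r : R, s - algebraMap R S r ∈ I.map (algebraMap R S))
    (hjac : I.map (algebraMap R S) ≤ (⊥ : Ideal S).jacobson) :
    LinearMap.ker (tensorSMul R S M) = ⊥ := by
  refine Submodule.eq_bot_of_le_smul_of_le_jacobson_bot _ _ (IsNoetherian.noetherian _)
    (fun t ht => ?_) hjac
  have : t ∈ I • (LinearMap.ker (tensorSMul R S M)).restrictScalars R := by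
    rwa [← ker_tensorSMul_restrictScalars_eq_smul I hcover]
  rwa [← Ideal.smul_restrictScalars] at this

lemma Module.Finite.of_injective_tensorSMul [Module.FaithfullyFlat R S] [Module.Finite S M]
    (h : Function.Injective (tensorSMul R S M)) : Module.Finite R M :=
  have : Module.Finite S (S ⊗[R] M) :=
    .equiv (LinearEquiv.ofBijective _ ⟨h, tensorSMul_surjective⟩).symm
  .of_finite_tensorProduct_of_faithfullyFlat S

end

theorem stmt_9_general (R S : Type*) [CommRing R] [CommRing S]
    [IsNoetherianRing S] [IsLocalRing R] [IsLocalRing S]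
    [Algebra R S] [Module.Flat R S] [IsLocalHom (algebraMap R S)]
    (h1 : (IsLocalRing.maximalIdeal R).map (algebraMap R S) = IsLocalRing.maximalIdeal S)
    (h2 : ∀ s : S, ∃ r : R, s - algebraMap R S r ∈ IsLocalRing.maximalIdeal S)
    (M : Type*) [AddCommGroup M] [Module S M] [Module R M] [IsScalarTower R S M]
    [Module.Finite S M] :
    (Module.Finite R M ↔ Function.Bijective (fun x : M => (1 : S) ⊗ₜ[R] x)) ∧
    (Function.Bijective (fun x : M => (1 : S) ⊗ₜ[R] x) ↔
      Module.Finite R (TensorProduct R S M)) := by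
  have hcover :
      ∀ s : S, ∃ r : R, s - algebraMap R S r ∈ (maximalIdeal R).map (algebraMap R S) :=
    h1 ▸ h2
  have hjac : (maximalIdeal R).map (algebraMap R S) ≤ (⊥ : Ideal S).jacobson :=
    h1 ▸ maximalIdeal_le_jacobson _
  have := Module.FaithfullyFlat.of_flat_of_isLocalHom (A := R) (B := S)
  have h12 : Module.Finite R M ↔ Function.Bijective (fun x : M => (1 : S) ⊗ₜ[R] x) := by
    rw [bijective_one_tmul_iff_injective_tensorSMul]
    exact ⟨fun _ => LinearMap.ker_eq_bot.mp (ker_tensorSMul_eq_bot _ hcover hjac),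
      Module.Finite.of_injective_tensorSMul⟩
  refine ⟨h12, fun hb => ?_, fun _ => h12.mp ?_⟩
  · have := h12.mpr hb
    exact .of_surjective (mk R S M 1) hb.2
  · exact .of_surjective ((tensorSMul R S M).restrictScalars R) tensorSMul_surjective

theorem stmt_9 (R S : Type*) [CommRing R] [CommRing S]
    [IsNoetherianRing R] [IsNoetherianRing S] [IsLocalRing R] [IsLocalRing S]
    [Algebra R S] [Module.Flat R S] [IsLocalHom (algebraMap R S)]
    (h1 : (IsLocalRing.maximalIdeal R).map (algebraMap R S) = IsLocalRing.maximalIdeal S)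
    (h2 : ∀ s : S, ∃ r : R, s - algebraMap R S r ∈ IsLocalRing.maximalIdeal S)
    (M : Type*) [AddCommGroup M] [Module S M] [Module R M] [IsScalarTower R S M]
    [Module.Finite S M] :
    (Module.Finite R M ↔ Function.Bijective (fun x : M => (1 : S) ⊗ₜ[R] x)) ∧
    (Function.Bijective (fun x : M => (1 : S) ⊗ₜ[R] x) ↔
      Module.Finite R (TensorProduct R S M)) :=
  stmt_9_general R S h1 h2 M
end

section
/- Let φ: R → S be a flat local homomorphism of Noetherian local rings satisfying condition (†). If S possesses a faithful S-module that is finitely generated as an R-module, then φ is an isomorphism. -/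
/-!
Since `S` acts faithfully on `N`, it embeds `R`-linearly into `End_R N`, a finite module over the
Noetherian ring `R`; so `S` is a finite `R`-algebra. Condition (†) says `S = R + 𝔪_R S`, and
Nakayama's lemma gives surjectivity. A flat local homomorphism is faithfully flat, hence injective.
-/

open IsLocalRing

theorem Module.Finite.of_faithful_of_finite (R S N : Type*) [CommRing R] [IsNoetherianRing R]
    [CommRing S] [Algebra R S] [AddCommGroup N] [Module S N] [Module R N] [IsScalarTower R S N]
    [Module.Finite R N] (hfaithful : ∀ s : S, (∀ x : N, s • x = 0) → s = 0) :
    Module.Finite R S := by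
  have hinj : Function.Injective (Algebra.lsmul R R N : S →ₐ[R] Module.End R N) :=
    (injective_iff_map_eq_zero _).mpr fun s hs => hfaithful s fun x => LinearMap.congr_fun hs x
  exact Module.Finite.of_injective (Algebra.lsmul R R N).toLinearMap hinj

theorem IsLocalRing.surjective_algebraMap_of_finite {R S : Type*} [CommRing R] [IsLocalRing R]
    [CommRing S] [Algebra R S] [Module.Finite R S]
    (h : ∀ s : S, ∃ r : R, s - algebraMap R S r ∈ (maximalIdeal R).map (algebraMap R S)) :
    Function.Surjective (algebraMap R S) := by
  have hle : (⊤ : Submodule R S) ≤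
      LinearMap.range (Algebra.linearMap R S) ⊔ maximalIdeal R • ⊤ := by
    intro s _
    obtain ⟨r, hr⟩ := h s
    rw [← sub_add_cancel s (algebraMap R S r), add_comm]
    refine Submodule.add_mem_sup ⟨r, rfl⟩ ?_
    rwa [Ideal.smul_top_eq_map, Submodule.restrictScalars_mem]
  intro s
  exact Submodule.le_of_le_smul_of_le_jacobson_bot Module.Finite.fg_top
    (maximalIdeal_le_jacobson ⊥) hle Submodule.mem_top

theorem stmt_10_general (R S : Type*) [CommRing R] [CommRing S]
    [IsNoetherianRing R] [IsLocalRing R] [IsLocalRing S]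
    [Algebra R S] [Module.Flat R S] [IsLocalHom (algebraMap R S)]
    (h1 : (IsLocalRing.maximalIdeal R).map (algebraMap R S) = IsLocalRing.maximalIdeal S)
    (h2 : ∀ s : S, ∃ r : R, s - algebraMap R S r ∈ IsLocalRing.maximalIdeal S)
    (N : Type*) [AddCommGroup N] [Module S N] [Module R N] [IsScalarTower R S N]
    (hfaithful : ∀ s : S, (∀ x : N, s • x = 0) → s = 0)
    (hfin : Module.Finite R N) :
    Function.Bijective (algebraMap R S) := by
  have : Module.Finite R S := .of_faithful_of_finite R S N hfaithful
  have : Module.FaithfullyFlat R S := .of_flat_of_isLocalHom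
  exact ⟨FaithfulSMul.algebraMap_injective R S,
    surjective_algebraMap_of_finite (h1 ▸ h2)⟩

theorem stmt_10 (R S : Type*) [CommRing R] [CommRing S]
    [IsNoetherianRing R] [IsNoetherianRing S] [IsLocalRing R] [IsLocalRing S]
    [Algebra R S] [Module.Flat R S] [IsLocalHom (algebraMap R S)]
    (h1 : (IsLocalRing.maximalIdeal R).map (algebraMap R S) = IsLocalRing.maximalIdeal S)
    (h2 : ∀ s : S, ∃ r : R, s - algebraMap R S r ∈ IsLocalRing.maximalIdeal S)
    (N : Type*) [AddCommGroup N] [Module S N] [Module R N] [IsScalarTower R S N]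
    (hfaithful : ∀ s : S, (∀ x : N, s • x = 0) → s = 0)
    (hfin : Module.Finite R N) :
    Function.Bijective (algebraMap R S) :=
  stmt_10_general R S h1 h2 N hfaithful hfin
end

section
/- Let φ: R → S be a local homomorphism of Noetherian local rings satisfying condition (†). The following are equivalent: (1) R admits an S-module structure compatible with its R-module structure via φ; (2) φ is an R-split monomorphism; (3) S is a free R-module; (4) φ is bijective. -/
/-! A retraction `π` of `φ` splits `S = φ(R) ⊕ ker π` as `R`-modules. Condition (†) says
`S = φ(R) + 𝔪S`, so projecting onto `ker π` gives `ker π = 𝔪 • ker π`; hence `ker π ⊆ 𝔪ᵏS = 𝔫ᵏ`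
for every `k`, and Krull's intersection theorem in `S` forces `ker π = 0`, i.e. `φ` is bijective.
A retraction comes from a compatible `S`-action on `R` as `s ↦ s ∘ 1`, and from a basis of a free
`S` as a coordinate of `1` that is a unit (one exists because `1 ∉ 𝔪S`). -/

open IsLocalRing

theorem Submodule.le_pow_smul_of_le_smul {R M : Type*} [CommRing R] [AddCommGroup M] [Module R M]
    {I : Ideal R} {N : Submodule R M} (h : N ≤ I • N) (k : ℕ) : N ≤ I ^ k • N := by
  induction k with
  | zero => rw [pow_zero, Ideal.one_eq_top, Submodule.top_smul]
  | succ k ih =>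
    calc N ≤ I • N := h
      _ ≤ I • I ^ k • N := smul_mono_right I ih
      _ = I ^ (k + 1) • N := by rw [← Submodule.mul_smul, pow_succ']

section Retraction

variable {R S : Type*} [CommRing R] [CommRing S] [Algebra R S]

theorem ker_le_smul_ker_of_retraction {I : Ideal R} (π : S →ₗ[R] R)
    (hπ : ∀ r, π (algebraMap R S r) = r)
    (hI : ∀ s : S, ∃ r : R, s - algebraMap R S r ∈ I.map (algebraMap R S)) :
    LinearMap.ker π ≤ I • LinearMap.ker π := by
  -- `p = id - φ ∘ π` maps `S` onto `ker π`, fixes `ker π` and kills `φ(R)`.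
  set p : S →ₗ[R] S := LinearMap.id - Algebra.linearMap R S ∘ₗ π
  have hp_range : LinearMap.range p ≤ LinearMap.ker π := by
    rintro _ ⟨s, rfl⟩
    simp [p, hπ]
  intro c hc
  obtain ⟨r, hr⟩ := hI c
  replace hr : c - algebraMap R S r ∈ I • (⊤ : Submodule R S) := by
    rwa [Ideal.smul_top_eq_map]
  have hpc : p (c - algebraMap R S r) = c := by
    simp [p, hπ, LinearMap.mem_ker.1 hc]
  have hmem := Submodule.mem_map_of_mem (f := p) hr
  rw [Submodule.map_smul'', Submodule.map_top, hpc] at hmem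
  exact (smul_mono_right I hp_range : I • LinearMap.range p ≤ _) hmem

theorem surjective_algebraMap_of_retraction [IsNoetherianRing S] [IsLocalRing S] {I : Ideal R}
    (hI : ∀ s : S, ∃ r : R, s - algebraMap R S r ∈ I.map (algebraMap R S))
    (hI_ne_top : I.map (algebraMap R S) ≠ ⊤) (π : S →ₗ[R] R)
    (hπ : ∀ r, π (algebraMap R S r) = r) :
    Function.Surjective (algebraMap R S) := by
  have hker : LinearMap.ker π = ⊥ := by
    refine eq_bot_iff.2 fun c hc => ?_
    have hpow : ∀ k : ℕ, c ∈ I.map (algebraMap R S) ^ k := fun k => by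
      have hck := Submodule.le_pow_smul_of_le_smul (ker_le_smul_ker_of_retraction π hπ hI) k hc
      have hck' : c ∈ I ^ k • (⊤ : Submodule R S) :=
        (smul_mono_right (I ^ k) le_top : I ^ k • LinearMap.ker π ≤ _) hck
      rw [← Ideal.map_pow]
      rwa [Ideal.smul_top_eq_map] at hck'
    have hKrull := Ideal.iInf_pow_eq_bot_of_isLocalRing _ hI_ne_top
    simpa [hKrull] using Ideal.mem_iInf.2 hpow
  intro s
  refine ⟨π s, (sub_eq_zero.1 ?_).symm⟩
  rw [← Submodule.mem_bot R, ← hker, LinearMap.mem_ker, map_sub, hπ, sub_self]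

end Retraction

theorem exists_linearMap_eq_one_of_notMem_smul_top {R M : Type*} [CommRing R] [IsLocalRing R]
    [AddCommGroup M] [Module R M] [Module.Free R M] {x : M}
    (hx : x ∉ maximalIdeal R • (⊤ : Submodule R M)) : ∃ f : M →ₗ[R] R, f x = 1 := by
  obtain ⟨⟨ι, b⟩⟩ := ‹Module.Free R M›
  obtain ⟨i, u, hu⟩ : ∃ i, IsUnit (b.repr x i) := by
    by_contra! h
    refine hx ?_
    rw [← b.linearCombination_repr x, Finsupp.linearCombination_apply, Finsupp.sum]
    exact Submodule.sum_mem _ fun i _ =>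
      Submodule.smul_mem_smul ((mem_maximalIdeal _).2 (h i)) trivial
  exact ⟨(↑u⁻¹ : R) • b.coord i, by simp [← hu]⟩

theorem exists_retraction_of_free {R S : Type*} [CommRing R] [IsLocalRing R] [CommRing S]
    [Algebra R S] [Module.Free R S] (h : (maximalIdeal R).map (algebraMap R S) ≠ ⊤) :
    ∃ π : S →ₗ[R] R, ∀ r, π (algebraMap R S r) = r := by
  have h1 : (1 : S) ∉ maximalIdeal R • (⊤ : Submodule R S) := by
    rw [Ideal.smul_top_eq_map, Submodule.restrictScalars_mem]
    exact fun h1 => h ((Ideal.eq_top_iff_one _).2 h1)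
  obtain ⟨π, hπ⟩ := exists_linearMap_eq_one_of_notMem_smul_top h1
  exact ⟨π, fun r => by rw [Algebra.algebraMap_eq_smul_one, map_smul, hπ, smul_eq_mul, mul_one]⟩

section Compatible

variable {R S : Type*} [CommRing R] [CommRing S] [Algebra R S]

theorem HasCompatibleSModule.exists_retraction (h : HasCompatibleSModule R S R) :
    ∃ π : S →ₗ[R] R, ∀ r, π (algebraMap R S r) = r := by
  obtain ⟨sm, -, h_mul, -, h_add, h_comp⟩ := h
  refine ⟨{ toFun s := sm s 1
            map_add' s t := h_add s t 1
            map_smul' r s := by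
              rw [Algebra.smul_def, h_mul, h_comp, RingHom.id_apply] }, fun r => ?_⟩
  simp [h_comp]

theorem hasCompatibleSModule_of_bijective (h : Function.Bijective (algebraMap R S)) :
    HasCompatibleSModule R S R := by
  let e := RingEquiv.ofBijective (algebraMap R S) h
  refine ⟨fun s x => e.symm s * x, fun x => ?_, fun s t x => ?_, fun s x y => ?_,
    fun s t x => ?_, fun r x => ?_⟩
  · simp
  · simp [mul_assoc]
  · simp [mul_add]
  · simp [add_mul]
  · exact congrArg (· * x) (e.symm_apply_apply r)

end Compatible

theorem stmt_11_general (R S : Type*) [CommRing R] [CommRing S]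
    [IsNoetherianRing S] [IsLocalRing R] [IsLocalRing S]
    [Algebra R S]
    (h1 : (IsLocalRing.maximalIdeal R).map (algebraMap R S) = IsLocalRing.maximalIdeal S)
    (h2 : ∀ s : S, ∃ r : R, s - algebraMap R S r ∈ IsLocalRing.maximalIdeal S) :
    (HasCompatibleSModule R S R ↔
      (Function.Injective (algebraMap R S) ∧
        ∃ π : S →ₗ[R] R, ∀ r : R, π (algebraMap R S r) = r)) ∧
    ((Function.Injective (algebraMap R S) ∧
        ∃ π : S →ₗ[R] R, ∀ r : R, π (algebraMap R S r) = r) ↔ Module.Free R S) ∧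
    (Module.Free R S ↔ Function.Bijective (algebraMap R S)) := by
  have h_ne_top : (maximalIdeal R).map (algebraMap R S) ≠ ⊤ :=
    h1 ▸ (maximalIdeal.isMaximal S).ne_top
  have split_iff : (∃ π : S →ₗ[R] R, ∀ r : R, π (algebraMap R S r) = r) ↔
      Function.Bijective (algebraMap R S) :=
    ⟨fun ⟨π, hπ⟩ => ⟨Function.LeftInverse.injective hπ,
        surjective_algebraMap_of_retraction (h1 ▸ h2) h_ne_top π hπ⟩,
      fun h => (hasCompatibleSModule_of_bijective h).exists_retraction⟩
  have compat_iff : HasCompatibleSModule R S R ↔ Function.Bijective (algebraMap R S) :=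
    ⟨fun h => split_iff.1 h.exists_retraction, hasCompatibleSModule_of_bijective⟩
  have free_iff : Module.Free R S ↔ Function.Bijective (algebraMap R S) :=
    ⟨fun _ => split_iff.1 (exists_retraction_of_free h_ne_top),
      fun h => .of_equiv (LinearEquiv.ofBijective (Algebra.linearMap R S) h)⟩
  have inj_split_iff : (Function.Injective (algebraMap R S) ∧
      ∃ π : S →ₗ[R] R, ∀ r : R, π (algebraMap R S r) = r) ↔ Function.Bijective (algebraMap R S) :=
    ⟨fun h => split_iff.1 h.2, fun h => ⟨h.1, split_iff.2 h⟩⟩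
  exact ⟨compat_iff.trans inj_split_iff.symm, inj_split_iff.trans free_iff.symm, free_iff⟩

theorem stmt_11 (R S : Type*) [CommRing R] [CommRing S]
    [IsNoetherianRing R] [IsNoetherianRing S] [IsLocalRing R] [IsLocalRing S]
    [Algebra R S] [IsLocalHom (algebraMap R S)]
    (h1 : (IsLocalRing.maximalIdeal R).map (algebraMap R S) = IsLocalRing.maximalIdeal S)
    (h2 : ∀ s : S, ∃ r : R, s - algebraMap R S r ∈ IsLocalRing.maximalIdeal S) :
    (HasCompatibleSModule R S R ↔
      (Function.Injective (algebraMap R S) ∧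
        ∃ π : S →ₗ[R] R, ∀ r : R, π (algebraMap R S r) = r)) ∧
    ((Function.Injective (algebraMap R S) ∧
        ∃ π : S →ₗ[R] R, ∀ r : R, π (algebraMap R S r) = r) ↔ Module.Free R S) ∧
    (Module.Free R S ↔ Function.Bijective (algebraMap R S)) :=
  stmt_11_general R S h1 h2
end
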